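/- The cumulative distribution function of the extended occupancy distribution is nonincreasing in n: defining F(k|n, m, θ) = ∑_{r=0}^{k} Occ(r|n, m, θ), one has F(k|n+1, m, θ) = F(k|n, m, θ) − θ·((m−k)/m)·Occ(k|n, m, θ), and hence F(k|n′, m, θ) ≤ F(k|n, m, θ) whenever n ≤ n′. -/

import Mathlib

open Finset

/-!
Up to the factor `C(m, k)`, `Occ k n m θ` is the `k`-th forward difference at `0` of
`i ↦ x i ^ n`, where `x i = 1 - θ (m - i) / m` is affine in `i` with slope `θ / m`. A Leibniz rule
for multiplication by an affine function yields the occupancy recursion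
`Occ (k+1) (n+1) = x (k+1) · Occ (k+1) n + θ (m - k) / m · Occ k n`. Summed over `k` it telescopes
to the recursion for `F`; by induction on `n` it also shows `Occ k n m θ ≥ 0` for `θ ∈ [0, 1]`
and `k ≤ m`, so each step of the recursion for `F` subtracts a nonnegative amount.
-/

/-- Extended occupancy mass function. -/
noncomputable def Occ (k n m : ℕ) (θ : ℝ) : ℝ :=
  (Nat.choose m k : ℝ) *
    ∑ i ∈ Finset.range (k + 1),
      (Nat.choose k i : ℝ) * (-1) ^ (k - i) * (1 - θ * ((m : ℝ) - i) / m) ^ n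

/-- Cumulative distribution function of the extended occupancy distribution. -/
noncomputable def F (k n m : ℕ) (θ : ℝ) : ℝ :=
  ∑ r ∈ Finset.range (k + 1), Occ r n m θ

open fwdDiff

section AffineLeibniz

variable {M R : Type*} [AddCommMonoid M] [CommRing R] {h : M} {x : M → R} {b : R}

theorem fwdDiff_mul_of_fwdDiff_eq_const (hx : Δ_[h] x = fun _ ↦ b) (g : M → R) :
    Δ_[h] (x * g) = (fun y ↦ x (y + h)) * Δ_[h] g + b • g := by
  ext y
  have hxy : x (y + h) - x y = b := congrFun hx y
  simp only [fwdDiff, Pi.mul_apply, Pi.add_apply, Pi.smul_apply, smul_eq_mul]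
  linear_combination g y * hxy

theorem fwdDiff_iter_succ_mul_of_fwdDiff_eq_const (hx : Δ_[h] x = fun _ ↦ b) (g : M → R)
    (k : ℕ) : (Δ_[h])^[k + 1] (x * g) =
      (fun y ↦ x (y + (k + 1) • h)) * (Δ_[h])^[k + 1] g + ((k + 1 : R) * b) • (Δ_[h])^[k] g := by
  induction k with
  | zero => simpa using fwdDiff_mul_of_fwdDiff_eq_const hx g
  | succ k ih =>
    have hshift : Δ_[h] (fun y ↦ x (y + (k + 1) • h)) = fun _ ↦ b := by
      ext y
      rw [fwdDiff_comp_add, hx]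
    rw [Function.iterate_succ_apply' _ (k + 1), ih, fwdDiff_add, fwdDiff_const_smul,
      fwdDiff_mul_of_fwdDiff_eq_const hshift, ← Function.iterate_succ_apply' (Δ_[h]) (k + 1),
      ← Function.iterate_succ_apply' (Δ_[h]) k]
    ext y
    simp only [Pi.add_apply, Pi.mul_apply, Pi.smul_apply, smul_eq_mul, Nat.succ_eq_add_one]
    rw [add_assoc y, ← succ_nsmul']
    push_cast
    ring

end AffineLeibniz

theorem Nat.cast_choose_succ_mul {R : Type*} [Ring R] (m r : ℕ) :
    (m.choose (r + 1) : R) * ((r : R) + 1) = m.choose r * ((m : R) - r) := by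
  rcases le_or_gt r m with hrm | hmr
  · rw [← Nat.cast_sub hrm]
    exact_mod_cast congrArg (Nat.cast : ℕ → R) (Nat.choose_succ_right_eq m r)
  · simp [Nat.choose_eq_zero_of_lt hmr, Nat.choose_eq_zero_of_lt (hmr.trans (Nat.lt_succ_self r))]

noncomputable def occFactor (m : ℕ) (θ : ℝ) (i : ℕ) : ℝ := 1 - θ * ((m : ℝ) - i) / m

theorem occFactor_nonneg {m i : ℕ} {θ : ℝ} (hθ0 : 0 ≤ θ) (hθ1 : θ ≤ 1) (hi : i ≤ m) :
    0 ≤ occFactor m θ i := by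
  have hi' : (i : ℝ) ≤ m := by exact_mod_cast hi
  have hfrac : ((m : ℝ) - i) / m ≤ 1 := div_le_one_of_le₀ (by linarith) (Nat.cast_nonneg m)
  have hfrac' : 0 ≤ ((m : ℝ) - i) / m := div_nonneg (by linarith) (Nat.cast_nonneg m)
  rw [occFactor, mul_div_assoc, sub_nonneg]
  nlinarith

theorem fwdDiff_occFactor (m : ℕ) (θ : ℝ) : Δ_[1] (occFactor m θ) = fun _ ↦ θ / m := by
  ext i
  simp only [fwdDiff, occFactor]
  push_cast
  ring

theorem Occ_eq_choose_mul_fwdDiff_iter (k n m : ℕ) (θ : ℝ) :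
    Occ k n m θ = m.choose k * (Δ_[1])^[k] (occFactor m θ ^ n) 0 := by
  rw [fwdDiff_iter_eq_sum_shift, Occ]
  congr 1
  refine sum_congr rfl fun i _ ↦ ?_
  simp only [zsmul_eq_mul, Pi.pow_apply, zero_add, smul_eq_mul, mul_one, occFactor]
  push_cast
  ring

theorem Occ_succ_zero (k m : ℕ) (θ : ℝ) : Occ (k + 1) 0 m θ = 0 := by
  have hconst : Δ_[1] (fun _ ↦ (0 : ℝ) : ℕ → ℝ) = fun _ ↦ 0 := fwdDiff_const 1 0
  rw [Occ_eq_choose_mul_fwdDiff_iter, pow_zero, Function.iterate_succ_apply]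
  simp [Pi.one_def, Function.iterate_fixed hconst]

theorem Occ_zero_succ (n m : ℕ) (θ : ℝ) : Occ 0 (n + 1) m θ = occFactor m θ 0 * Occ 0 n m θ := by
  simp [Occ_eq_choose_mul_fwdDiff_iter, pow_succ']

theorem Occ_succ_succ (k n m : ℕ) (θ : ℝ) :
    Occ (k + 1) (n + 1) m θ =
      occFactor m θ (k + 1) * Occ (k + 1) n m θ + θ * ((m : ℝ) - k) / m * Occ k n m θ := by
  simp only [Occ_eq_choose_mul_fwdDiff_iter, pow_succ',
    fwdDiff_iter_succ_mul_of_fwdDiff_eq_const (fwdDiff_occFactor m θ), Pi.add_apply,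
    Pi.mul_apply, Pi.smul_apply, smul_eq_mul, zero_add, mul_one]
  linear_combination
    θ / m * (Δ_[1])^[k] (occFactor m θ ^ n) 0 * Nat.cast_choose_succ_mul (R := ℝ) m k

theorem F_succ (k n m : ℕ) (θ : ℝ) :
    F k (n + 1) m θ = F k n m θ - θ * (((m : ℝ) - k) / m) * Occ k n m θ := by
  induction k with
  | zero =>
    simp only [F, zero_add, sum_range_one, Occ_zero_succ, occFactor, Nat.cast_zero]
    ring
  | succ k ih =>
    simp only [F] at ih ⊢
    rw [sum_range_succ, ih, sum_range_succ _ (k + 1), Occ_succ_succ, occFactor]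
    push_cast
    ring

theorem Occ_nonneg {m : ℕ} {θ : ℝ} (hθ0 : 0 ≤ θ) (hθ1 : θ ≤ 1) (n : ℕ) {k : ℕ} (hk : k ≤ m) :
    0 ≤ Occ k n m θ := by
  induction n generalizing k with
  | zero =>
    cases k with
    | zero => simp [Occ]
    | succ k => rw [Occ_succ_zero]
  | succ n ih =>
    cases k with
    | zero => exact Occ_zero_succ n m θ ▸ mul_nonneg (occFactor_nonneg hθ0 hθ1 hk) (ih hk)
    | succ k =>
      have hkm : (k : ℝ) ≤ m := by exact_mod_cast (Nat.le_succ k).trans hk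
      rw [Occ_succ_succ]
      exact add_nonneg (mul_nonneg (occFactor_nonneg hθ0 hθ1 hk) (ih hk))
        (mul_nonneg (div_nonneg (mul_nonneg hθ0 (sub_nonneg.2 hkm)) (Nat.cast_nonneg m))
          (ih ((Nat.le_succ k).trans hk)))

theorem occupancy_cdf_nonincreasing_in_n_general (m k : ℕ) (hk : k ≤ m)
    (θ : ℝ) (hθ0 : 0 < θ) (hθ1 : θ ≤ 1) :
    (∀ n : ℕ, F k (n + 1) m θ = F k n m θ - θ * (((m : ℝ) - k) / m) * Occ k n m θ) ∧
      ∀ n n' : ℕ, n ≤ n' → F k n' m θ ≤ F k n m θ := by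
  refine ⟨fun n ↦ F_succ k n m θ, fun n n' hn ↦
    antitone_nat_of_succ_le (f := (F k · m θ)) (fun n ↦ ?_) hn⟩
  have hkm : (0 : ℝ) ≤ (m - k) / m :=
    div_nonneg (sub_nonneg.2 (by exact_mod_cast hk)) (Nat.cast_nonneg m)
  have hdecrement := mul_nonneg (mul_nonneg hθ0.le hkm) (Occ_nonneg hθ0.le hθ1 n hk)
  rw [F_succ]
  linarith

theorem occupancy_cdf_nonincreasing_in_n (m k : ℕ) (hm : 0 < m) (hk : k ≤ m)
    (θ : ℝ) (hθ0 : 0 < θ) (hθ1 : θ ≤ 1) :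
    (∀ n : ℕ, F k (n + 1) m θ = F k n m θ - θ * (((m : ℝ) - k) / m) * Occ k n m θ) ∧
      ∀ n n' : ℕ, n ≤ n' → F k n' m θ ≤ F k n m θ :=
  occupancy_cdf_nonincreasing_in_n_general m k hk θ hθ0 hθ1
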